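/- arXiv:1006.0285 — 6 statements merged into one kernel-verified Lean document; each statement's English description precedes it below -/
import Mathlib

section
/- Let α = (√5 - 1)/2 and let F_n be the Fibonacci numbers. Then lim_{n→∞} F_n² · (2 - 2cos(2π F_n α)) = 4π²/5. -/
/-!
Write `φ⁻¹ = -ψ` for the golden mean, so that `ψ F (n + 1) + F n = ψ ^ (n + 1)` gives
`F n · φ⁻¹ ≡ ±φ⁻¹ ^ n (mod 1)`, and hence `2 - 2 cos (2π F n φ⁻¹) = 4 sin² (π φ⁻¹ ^ n)`.
Since `sin x ~ x` at `0` and Binet's formula gives `F n · φ⁻¹ ^ n → 1 / √5`, the product tends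
to `4π² / 5`.
-/

open Real Filter Topology
open scoped goldenRatio

namespace Real

lemma sin_eq_mul_sinc (x : ℝ) : sin x = x * sinc x := by
  rcases eq_or_ne x 0 with rfl | hx
  · simp
  · rw [sinc_of_ne_zero hx, mul_div_cancel₀ _ hx]

lemma tendsto_sq_mul_two_sub_two_mul_cos {ι : Type*} {l : Filter ι} {a x : ι → ℝ} {c : ℝ}
    (hx : Tendsto x l (𝓝 0)) (hax : Tendsto (fun i => a i * x i) l (𝓝 c)) :
    Tendsto (fun i => a i ^ 2 * (2 - 2 * cos (2 * π * x i))) l (𝓝 (4 * π ^ 2 * c ^ 2)) := by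
  have hsinc : Tendsto (fun i => sinc (π * x i)) l (𝓝 1) :=
    (continuous_sinc.tendsto' 0 1 sinc_zero).comp (by simpa using hx.const_mul π)
  have h := ((hax.pow 2).const_mul (4 * π ^ 2)).mul (hsinc.pow 2)
  rw [one_pow, mul_one] at h
  refine h.congr fun i => ?_
  have hsin := sin_sq_eq_half_sub (π * x i)
  rw [sin_eq_mul_sinc, ← mul_assoc] at hsin
  linear_combination 4 * a i ^ 2 * hsin

lemma inv_goldenRatio_lt_one : φ⁻¹ < 1 :=
  inv_lt_one_of_one_lt₀ one_lt_goldenRatio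

lemma tendsto_fib_mul_inv_goldenRatio_pow :
    Tendsto (fun n : ℕ => (Nat.fib n : ℝ) * φ⁻¹ ^ n) atTop (𝓝 (1 / √5)) := by
  have hq : |ψ * φ⁻¹| < 1 := by
    rw [abs_mul, abs_inv, abs_of_pos goldenRatio_pos, abs_of_neg goldenConj_neg,
      ← inv_goldenRatio]
    exact mul_lt_one_of_nonneg_of_lt_one_left (by positivity) inv_goldenRatio_lt_one
      inv_goldenRatio_lt_one.le
  have h := ((tendsto_pow_atTop_nhds_zero_of_abs_lt_one hq).const_sub 1).div_const √5
  rw [sub_zero] at h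
  refine h.congr fun n => ?_
  rw [coe_fib_eq, mul_pow, div_mul_eq_mul_div, sub_mul, ← mul_pow φ,
    mul_inv_cancel₀ goldenRatio_ne_zero, one_pow]

lemma cos_two_pi_mul_fib_mul_inv_goldenRatio (n : ℕ) :
    cos (2 * π * Nat.fib n * φ⁻¹) = cos (2 * π * φ⁻¹ ^ n) := by
  cases n with
  | zero => simp
  | succ n =>
    have h : (Nat.fib (n + 1) : ℝ) * φ⁻¹ = Nat.fib n - ψ ^ (n + 1) := by
      rw [inv_goldenRatio]
      linear_combination -goldenConj_mul_fib_succ_add_fib n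
    rw [mul_assoc, h, mul_sub, mul_comm (2 * π), cos_nat_mul_two_pi_sub, ← cos_abs, abs_mul,
      abs_pow, abs_of_neg goldenConj_neg, ← inv_goldenRatio, abs_of_pos two_pi_pos]

end Real

/-- For the golden mean `α = (√5 - 1)/2` and the Fibonacci numbers `F n`,
`F n ^ 2 * (2 - 2 cos (2π F n α)) → 4π²/5` as `n → ∞`. -/
theorem fib_sq_mul_two_sub_cos_tendsto (α : ℝ) (hα : α = (Real.sqrt 5 - 1) / 2) :
    Tendsto (fun n : ℕ => (Nat.fib n : ℝ) ^ 2 *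
      (2 - 2 * Real.cos (2 * Real.pi * (Nat.fib n : ℝ) * α)))
      atTop (nhds (4 * Real.pi ^ 2 / 5)) := by
  obtain rfl : α = φ⁻¹ := by rw [hα, inv_goldenRatio, goldenConj]; ring
  have h := tendsto_sq_mul_two_sub_two_mul_cos
    (tendsto_pow_atTop_nhds_zero_of_lt_one (by positivity) inv_goldenRatio_lt_one)
    tendsto_fib_mul_inv_goldenRatio_pow
  rw [div_pow, one_pow, sq_sqrt (by norm_num), ← div_eq_mul_one_div] at h
  simpa only [cos_two_pi_mul_fib_mul_inv_goldenRatio] using h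
end

section
/- Let α = (√5 - 1)/2, let F_n be the Fibonacci numbers, and let g(x) = log(2 - 2cos(2πx)). Then lim_{n→∞} [ g(F_n α) + 2 log F_n ] = log(4π²/5). -/
open Real Filter

/-- For the golden mean `α = (√5 - 1)/2`, the Fibonacci numbers `F n` and
`g x = log (2 - 2 cos (2π x))`, one has `g (F n * α) + 2 log (F n) → log (4π²/5)`. -/
theorem g_fib_alpha_add_log_tendsto (α : ℝ) (hα : α = (Real.sqrt 5 - 1) / 2)
    (g : ℝ → ℝ) (hg : ∀ x, g x = Real.log (2 - 2 * Real.cos (2 * Real.pi * x))) :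
    Tendsto (fun n : ℕ => g ((Nat.fib n : ℝ) * α) + 2 * Real.log (Nat.fib n))
      atTop (nhds (Real.log (4 * Real.pi ^ 2 / 5))) := by
  have h5 : Real.sqrt 5 ^ 2 = 5 := Real.sq_sqrt (by norm_num)
  have h5pos : 0 < Real.sqrt 5 := Real.sqrt_pos.mpr (by norm_num)
  have hαpos : 0 < α := by rw [hα]; nlinarith
  have hα1 : α < 1 := by rw [hα]; nlinarith
  have hα2 : α ^ 2 = 1 - α := by rw [hα]; linear_combination h5 / 4
  have hs5α : Real.sqrt 5 * α = 1 + α ^ 2 := by rw [hα]; linear_combination h5 / 4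
  -- key identity: fib(n+1) * α = fib n + (-1)^n α^(n+1)
  have H : ∀ n : ℕ, (Nat.fib (n + 1) : ℝ) * α = (Nat.fib n : ℝ) + (-1) ^ n * α ^ (n + 1) := by
    intro n
    induction n using Nat.twoStepInduction with
    | zero => simp
    | one => norm_num [Nat.fib]; linear_combination hα2
    | more n ih1 ih2 =>
      have h3 : (Nat.fib (n + 3) : ℝ) = (Nat.fib (n + 1) : ℝ) + (Nat.fib (n + 2) : ℝ) := by
        rw [show n + 3 = (n + 1) + 2 from rfl, Nat.fib_add_two]; push_cast; ring
      have h2 : (Nat.fib (n + 2) : ℝ) = (Nat.fib n : ℝ) + (Nat.fib (n + 1) : ℝ) := by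
        rw [Nat.fib_add_two]; push_cast; ring
      linear_combination α * h3 + ih1 + ih2 - h2 - (-1) ^ n * α ^ (n + 1) * hα2
  -- Binet-type identity
  have E : ∀ n : ℕ, Real.sqrt 5 * ((Nat.fib n : ℝ) * α ^ n) = 1 - (-1) ^ n * α ^ (2 * n) := by
    intro n
    induction n with
    | zero => simp
    | succ n ih =>
      have hacc : α ^ (n + 1) = α ^ n * α := by ring
      linear_combination Real.sqrt 5 * α ^ n * H n + ih + (-1) ^ n * α ^ (2 * n) * hs5α
  -- (-1)^n α^(2n) → 0
  have h1 : Tendsto (fun n : ℕ => ((-1 : ℝ)) ^ n * α ^ (2 * n)) atTop (nhds 0) := by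
    refine squeeze_zero_norm (a := fun n : ℕ => (α ^ 2) ^ n) (fun n => ?_)
      (tendsto_pow_atTop_nhds_zero_of_lt_one (by positivity) (by nlinarith))
    rw [norm_mul, norm_pow, norm_pow]
    simp [abs_of_pos hαpos, pow_mul]
  -- fib n * α^n → 1/√5
  have hS : Tendsto (fun n : ℕ => (Nat.fib n : ℝ) * α ^ n) atTop (nhds (1 / Real.sqrt 5)) := by
    have h2 : Tendsto (fun n : ℕ => (1 - (-1 : ℝ) ^ n * α ^ (2 * n)) / Real.sqrt 5) atTop
        (nhds ((1 - 0) / Real.sqrt 5)) := (tendsto_const_nhds.sub h1).div_const _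
    rw [sub_zero] at h2
    refine h2.congr fun n => ?_
    rw [div_eq_iff h5pos.ne']; linear_combination -E n
  -- sin x / x → 1
  have hslope : Tendsto (fun x : ℝ => Real.sin x / x) (nhdsWithin 0 {(0:ℝ)}ᶜ) (nhds 1) := by
    have h := hasDerivAt_iff_tendsto_slope.mp (Real.hasDerivAt_sin 0)
    rw [Real.cos_zero] at h
    refine h.congr fun x => ?_
    simp [slope_def_field]
  have hb : Tendsto (fun n : ℕ => π * α ^ (n + 1)) atTop (nhdsWithin 0 {(0:ℝ)}ᶜ) := by
    apply tendsto_nhdsWithin_of_tendsto_nhds_of_eventually_within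
    · have h' : Tendsto (fun n : ℕ => α ^ (n + 1)) atTop (nhds 0) :=
        (tendsto_pow_atTop_nhds_zero_of_lt_one hαpos.le hα1).comp (tendsto_add_atTop_nat 1)
      simpa using h'.const_mul π
    · filter_upwards with n
      exact (mul_pos Real.pi_pos (pow_pos hαpos _)).ne'
  have hratio : Tendsto (fun n : ℕ => Real.sin (π * α ^ (n + 1)) / (π * α ^ (n + 1))) atTop
      (nhds 1) := hslope.comp hb
  -- the main quantity
  have ht : Tendsto (fun n : ℕ => 2 * (Nat.fib (n + 1) : ℝ) * Real.sin (π * α ^ (n + 1))) atTop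
      (nhds (2 * π / Real.sqrt 5)) := by
    have h3 : Tendsto (fun n : ℕ =>
        2 * π * ((Nat.fib (n + 1) : ℝ) * α ^ (n + 1)) *
          (Real.sin (π * α ^ (n + 1)) / (π * α ^ (n + 1)))) atTop
        (nhds (2 * π * (1 / Real.sqrt 5) * 1)) :=
      (tendsto_const_nhds.mul (hS.comp (tendsto_add_atTop_nat 1))).mul hratio
    rw [show 2 * π * (1 / Real.sqrt 5) * 1 = 2 * π / Real.sqrt 5 by ring] at h3
    refine h3.congr fun n => ?_
    have hne : π * α ^ (n + 1) ≠ 0 := (mul_pos Real.pi_pos (pow_pos hαpos _)).ne'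
    field_simp
  have hsq : Tendsto (fun n : ℕ =>
      (2 * (Nat.fib (n + 1) : ℝ) * Real.sin (π * α ^ (n + 1))) ^ 2) atTop
      (nhds (4 * π ^ 2 / 5)) := by
    have := ht.pow 2
    rwa [show (2 * π / Real.sqrt 5) ^ 2 = 4 * π ^ 2 / 5 by rw [div_pow, h5]; ring] at this
  have hlog : Tendsto (fun n : ℕ =>
      Real.log ((2 * (Nat.fib (n + 1) : ℝ) * Real.sin (π * α ^ (n + 1))) ^ 2)) atTop
      (nhds (Real.log (4 * π ^ 2 / 5))) :=
    ((Real.continuousAt_log (by positivity)).tendsto.comp hsq)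
  rw [← tendsto_add_atTop_iff_nat 1]
  refine hlog.congr fun n => ?_
  -- pointwise identity
  have hfpos : 0 < (Nat.fib (n + 1) : ℝ) := by
    exact_mod_cast Nat.fib_pos.mpr (Nat.succ_pos n)
  have hx1 : α ^ (n + 1) < 1 := pow_lt_one₀ hαpos.le hα1 (Nat.succ_ne_zero n)
  have hspos : 0 < Real.sin (π * α ^ (n + 1)) := by
    apply Real.sin_pos_of_pos_of_lt_pi
    · exact mul_pos Real.pi_pos (pow_pos hαpos _)
    · nlinarith [Real.pi_pos, pow_pos hαpos (n + 1)]
  have hc2 : Real.cos (2 * π * ((Nat.fib n : ℝ) + (-1) ^ n * α ^ (n + 1)))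
      = Real.cos (2 * π * α ^ (n + 1)) := by
    rcases Nat.even_or_odd n with he | ho
    · rw [he.neg_one_pow]
      rw [show 2 * π * ((Nat.fib n : ℝ) + 1 * α ^ (n + 1))
          = 2 * π * α ^ (n + 1) + ((Nat.fib n : ℤ) : ℝ) * (2 * π) by push_cast; ring]
      exact Real.cos_add_int_mul_two_pi _ _
    · rw [ho.neg_one_pow]
      rw [show 2 * π * ((Nat.fib n : ℝ) + (-1) * α ^ (n + 1))
          = -(2 * π * α ^ (n + 1)) + ((Nat.fib n : ℤ) : ℝ) * (2 * π) by push_cast; ring]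
      rw [Real.cos_add_int_mul_two_pi, Real.cos_neg]
  have e1 : 2 - 2 * Real.cos (2 * π * ((Nat.fib (n + 1) : ℝ) * α))
      = 4 * Real.sin (π * α ^ (n + 1)) ^ 2 := by
    rw [H n, hc2, show 2 * π * α ^ (n + 1) = 2 * (π * α ^ (n + 1)) by ring,
      Real.cos_two_mul (π * α ^ (n + 1))]
    linarith [Real.sin_sq_add_cos_sq (π * α ^ (n + 1))]
  rw [hg, e1]
  rw [show (2 * (Nat.fib (n + 1) : ℝ) * Real.sin (π * α ^ (n + 1))) ^ 2
      = (4 * Real.sin (π * α ^ (n + 1)) ^ 2) * (Nat.fib (n + 1) : ℝ) ^ 2 by ring]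
  rw [Real.log_mul (by positivity) (by positivity), Real.log_pow]
  push_cast
  ring
end

section
/- Let α = (√5 - 1)/2 and fix 0 < r < 1. Then the sequence of sums ∑_{k=1}^{n} log|1 - r e^{2πi k α}| is bounded uniformly in n, i.e. there exists C > 0 with |∑_{k=1}^{n} log|1 - r e^{2πi k α}|| ≤ C for all n ≥ 1. -/
open Real Finset
open scoped goldenRatio

/-!
Expanding `-log (1 - w) = ∑ wᵐ / m` and summing over `k` turns the Birkhoff sum into
`-∑ₘ (rᵐ / m) ∑_{k ≤ n} z^{mk}` with `z = e^{2πiα}`. Each inner geometric sum is at most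
`2 / |z^m - 1|`. Since `α = -ψ` is badly approximable (`|mψ + p| ≥ 1 / (4m)`, because
`(mψ + p)(mφ + p) = p² + mp - m²` is a nonzero integer), `|z^m - 1| ≥ 4 dist(mα, ℤ) ≥ 1 / m`,
so the `m`-th term is at most `2 rᵐ` and the whole sum is at most `2 / (1 - r)`.
-/

theorem one_div_four_mul_le_abs_natCast_mul_goldenConj_add_intCast {m : ℕ} (hm : 0 < m) (p : ℤ) :
    1 / (4 * m) ≤ |m * ψ + p| := by
  have hm1 : (1 : ℝ) ≤ m := by exact_mod_cast hm
  have hψ : (m : ℝ) * ψ + p ≠ 0 :=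
    ((goldenConj_irrational.natCast_mul hm.ne').add_intCast p).ne_zero
  have hφ : (m : ℝ) * φ + p ≠ 0 :=
    ((goldenRatio_irrational.natCast_mul hm.ne').add_intCast p).ne_zero
  have hnorm : 1 ≤ |m * ψ + p| * |m * φ + p| := by
    have hint : (m * ψ + p) * (m * φ + p) = ((p ^ 2 + m * p - m ^ 2 : ℤ) : ℝ) := by
      push_cast
      linear_combination (m : ℝ) ^ 2 * goldenConj_mul_goldenRatio +
        m * p * goldenRatio_add_goldenConj
    have hne : (p ^ 2 + m * p - m ^ 2 : ℤ) ≠ 0 := by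
      rw [← Int.cast_ne_zero (α := ℝ), ← hint]
      exact mul_ne_zero hψ hφ
    rw [← abs_mul, hint, ← Int.cast_abs]
    exact_mod_cast Int.one_le_abs hne
  have hφψ : |m * φ + p| ≤ |m * ψ + p| + m * √5 := by
    calc |m * φ + p| = |(m * ψ + p) + m * √5| := by rw [← goldenRatio_sub_goldenConj]; ring_nf
      _ ≤ |m * ψ + p| + m * √5 := by
        grw [abs_add_le, abs_of_nonneg (by positivity : (0 : ℝ) ≤ m * √5)]
  have hsqrt5 : √5 ≤ 3 := by
    rw [sqrt_le_left (by norm_num)]; norm_num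
  rcases le_or_gt 1 |m * ψ + p| with hge | hlt
  · calc (1 : ℝ) / (4 * m) ≤ 1 := by rw [div_le_one (by positivity)]; linarith
      _ ≤ _ := hge
  · have hφ_le : |m * φ + p| ≤ 4 * m := by nlinarith
    rw [div_le_iff₀ (by positivity)]
    nlinarith [mul_le_mul_of_nonneg_left hφ_le (abs_nonneg ((m : ℝ) * ψ + p))]

theorem two_mul_abs_sub_round_le_abs_sin_pi_mul (x : ℝ) : 2 * |x - round x| ≤ |sin (π * x)| := by
  have hsin : |sin (π * x)| = |sin (π * (x - round x))| := by
    rw [show π * x = π * (x - round x) + round x * π by ring, sin_add_int_mul_pi, abs_mul,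
      abs_neg_one_zpow, one_mul]
  have hπ : |π * (x - round x)| ≤ π / 2 := by
    rw [abs_mul, abs_of_pos pi_pos]
    nlinarith [abs_sub_round x, pi_pos]
  have hjordan := mul_abs_le_abs_sin hπ
  rw [abs_mul, abs_of_pos pi_pos] at hjordan
  rw [hsin]
  convert hjordan using 1
  field_simp

theorem four_mul_abs_sub_round_le_norm_exp_sub_one (x : ℝ) :
    4 * |x - round x| ≤ ‖Complex.exp (2 * π * Complex.I * x) - 1‖ := by
  have hnorm := Complex.norm_exp_I_mul_ofReal_sub_one (2 * π * x)
  rw [show Complex.I * ((2 * π * x : ℝ) : ℂ) = 2 * π * Complex.I * x by push_cast; ring] at hnorm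
  rw [hnorm, norm_mul, Real.norm_eq_abs, Real.norm_eq_abs, abs_two,
    show 2 * π * x / 2 = π * x by ring]
  linarith [two_mul_abs_sub_round_le_abs_sin_pi_mul x]

theorem one_div_le_norm_exp_neg_goldenConj_pow_sub_one {m : ℕ} (hm : 0 < m) :
    1 / m ≤ ‖Complex.exp (2 * π * Complex.I * (-ψ : ℝ)) ^ m - 1‖ := by
  have hpow : Complex.exp (2 * π * Complex.I * (-ψ : ℝ)) ^ m =
      Complex.exp (2 * π * Complex.I * (m * -ψ : ℝ)) := by
    rw [← Complex.exp_nat_mul]; push_cast; ring_nf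
  have hdist := one_div_four_mul_le_abs_natCast_mul_goldenConj_add_intCast hm (round (m * -ψ))
  rw [hpow]
  calc (1 : ℝ) / m = 4 * (1 / (4 * m)) := by field_simp
    _ ≤ 4 * |m * -ψ - round (m * -ψ)| := by
        rw [show (m : ℝ) * -ψ - round (m * -ψ) = -(m * ψ + round (m * -ψ)) by ring, abs_neg]
        gcongr
    _ ≤ _ := four_mul_abs_sub_round_le_norm_exp_sub_one _

theorem norm_sum_Icc_pow_le {𝕜 : Type*} [NormedDivisionRing 𝕜] {ζ : 𝕜} (hζ : ‖ζ‖ ≤ 1)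
    (hζ1 : ζ ≠ 1) (n : ℕ) : ‖∑ k ∈ Icc 1 n, ζ ^ k‖ ≤ 2 / ‖ζ - 1‖ := by
  rw [← Ico_add_one_right_eq_Icc, geom_sum_Ico hζ1 (by omega), norm_div]
  gcongr
  calc ‖ζ ^ (n + 1) - ζ ^ 1‖ ≤ ‖ζ‖ ^ (n + 1) + ‖ζ‖ ^ 1 := by
        grw [norm_sub_le, norm_pow, norm_pow]
    _ ≤ 2 := by
        grw [pow_le_one₀ (norm_nonneg _) hζ, pow_le_one₀ (norm_nonneg _) hζ]; norm_num

theorem norm_sum_Icc_mul_pow_pow_div_le {z w : ℂ} {c : ℝ} (hc : 0 < c) (hz : ‖z‖ ≤ 1)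
    (hdiv : ∀ m : ℕ, 0 < m → c / m ≤ ‖z ^ m - 1‖) (n m : ℕ) :
    ‖∑ k ∈ Icc 1 n, (w * z ^ k) ^ m / m‖ ≤ 2 / c * ‖w‖ ^ m := by
  rcases Nat.eq_zero_or_pos m with rfl | hm
  · simpa using (by positivity : (0 : ℝ) ≤ 2 / c)
  have hdiv_m := hdiv m hm
  have hpos : 0 < ‖z ^ m - 1‖ := (by positivity : (0 : ℝ) < c / m).trans_le hdiv_m
  have hgeom := norm_sum_Icc_pow_le ((norm_pow z m).trans_le (pow_le_one₀ (norm_nonneg z) hz))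
    (sub_ne_zero.mp (norm_pos_iff.mp hpos)) n
  calc ‖∑ k ∈ Icc 1 n, (w * z ^ k) ^ m / m‖ = ‖w‖ ^ m / m * ‖∑ k ∈ Icc 1 n, (z ^ m) ^ k‖ := by
        have hterm : ∀ k, (w * z ^ k) ^ m / m = w ^ m / m * (z ^ m) ^ k := fun k => by
          rw [mul_pow, ← pow_mul, mul_comm k, pow_mul]; ring
        rw [sum_congr rfl fun k _ => hterm k, ← mul_sum, norm_mul, norm_div, norm_pow,
          Complex.norm_natCast]
    _ ≤ ‖w‖ ^ m / m * (2 / (c / m)) := by grw [hgeom, hdiv_m]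
    _ = 2 / c * ‖w‖ ^ m := by field_simp

theorem norm_sum_log_one_sub_mul_pow_le {z w : ℂ} {c : ℝ} (hc : 0 < c) (hz : ‖z‖ ≤ 1)
    (hw : ‖w‖ < 1) (hdiv : ∀ m : ℕ, 0 < m → c / m ≤ ‖z ^ m - 1‖) (n : ℕ) :
    ‖∑ k ∈ Icc 1 n, Complex.log (1 - w * z ^ k)‖ ≤ 2 / c * (1 - ‖w‖)⁻¹ := by
  have hlog : HasSum (fun m : ℕ => ∑ k ∈ Icc 1 n, (w * z ^ k) ^ m / m)
      (∑ k ∈ Icc 1 n, -Complex.log (1 - w * z ^ k)) :=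
    hasSum_sum fun k _ => Complex.hasSum_taylorSeries_neg_log <| by
      grw [norm_mul, norm_pow, pow_le_one₀ (norm_nonneg z) hz, mul_one]; exact hw
  have hgeom : HasSum (fun m : ℕ => 2 / c * ‖w‖ ^ m) (2 / c * (1 - ‖w‖)⁻¹) :=
    (hasSum_geometric_of_lt_one (norm_nonneg w) hw).mul_left _
  rw [← norm_neg, ← sum_neg_distrib, ← hlog.tsum_eq]
  exact tsum_of_norm_bounded hgeom (norm_sum_Icc_mul_pow_pow_div_le hc hz hdiv n)

/-- For the golden mean `α = (√5 - 1)/2` and `0 < r < 1`, the Birkhoff sums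
`∑_{k=1}^{n} log |1 - r e^{2πi k α}|` are uniformly bounded in `n`. -/
theorem birkhoff_sum_subcritical_bounded (α : ℝ) (hα : α = (Real.sqrt 5 - 1) / 2)
    (r : ℝ) (hr0 : 0 < r) (hr1 : r < 1) :
    ∃ C > 0, ∀ n : ℕ, 1 ≤ n →
      |∑ k ∈ Finset.Icc 1 n,
        Real.log (‖1 - (r : ℂ) * Complex.exp (2 * Real.pi * Complex.I * k * α)‖)| ≤ C := by
  obtain rfl : α = -ψ := by rw [hα, goldenConj]; ring
  set z := Complex.exp (2 * π * Complex.I * (-ψ : ℝ))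
  have hz : ‖z‖ = 1 := by simp [z, Complex.norm_exp]
  have hpow (k : ℕ) : Complex.exp (2 * π * Complex.I * k * (-ψ : ℝ)) = z ^ k := by
    rw [← Complex.exp_nat_mul]; ring_nf
  have hr : ‖(r : ℂ)‖ = r := by rw [Complex.norm_real, norm_of_nonneg hr0.le]
  refine ⟨2 * (1 - r)⁻¹, by have := sub_pos.mpr hr1; positivity, fun n _ => ?_⟩
  have hbound := norm_sum_log_one_sub_mul_pow_le one_pos hz.le (hr.symm ▸ hr1)
    (fun m hm => one_div_le_norm_exp_neg_goldenConj_pow_sub_one hm) n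
  rw [hr, div_one] at hbound
  calc _ = |(∑ k ∈ Icc 1 n, Complex.log (1 - r * z ^ k)).re| := by
        simp only [Complex.re_sum, Complex.log_re, hpow]
    _ ≤ _ := (Complex.abs_re_le_norm _).trans hbound
end

section
/- Let α = (√5 - 1)/2, g(x) = log(2 - 2cos(2πx)), S_k(α) = ∑_{j=1}^{k} g(jα), and let F_n be the Fibonacci numbers. Then there exists a constant C > 0 such that |S_{F_n - 1}(α)| ≤ C log F_n for all n ≥ 3. -/
open Real Finset
open scoped goldenRatio

/-!
If `p / q` is a reduced fraction with `q * |q * α - p| ≤ 1 / 2`, then for `0 < j < q` the point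
`j * α` lies within `1 / (2 * q)` of `r / q` modulo `1`, where `r = j * p % q` runs through
`1, …, q - 1` exactly once. As `g x = 2 * log |2 * sin (π * x)|`, replacing `g (j * α)` by
`g (r / q)` costs `O (1 / r + 1 / (q - r))`, which sums to `O (log q)`; and the cyclotomic identity
`∏_{r = 1}^{q - 1} 2 * sin (π * r / q) = q` evaluates the main term as `2 * log q`.
For the golden mean, Binet's formula shows that `F (n - 1) / F n` are such fractions.
-/

lemma abs_log_sub_log_le {a b : ℝ} (ha : 0 < a) (hb : 0 < b) :
    |log a - log b| ≤ |a - b| / min a b := by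
  wlog hba : b ≤ a generalizing a b
  · simpa only [abs_sub_comm, min_comm] using this hb ha (le_of_not_ge hba)
  have hlog : log a - log b ≤ (a - b) / b := by
    rw [← log_div ha.ne' hb.ne', sub_div, div_self hb.ne']
    exact log_le_sub_one_of_pos (div_pos ha hb)
  rw [min_eq_right hba, abs_of_nonneg (sub_nonneg.2 (log_le_log hb hba)),
    abs_of_nonneg (sub_nonneg.2 hba)]
  exact hlog

lemma two_mul_min_le_sin_pi_mul {x : ℝ} (h0 : 0 ≤ x) (h1 : x ≤ 1) :
    2 * min x (1 - x) ≤ sin (π * x) := by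
  wlog hx : x ≤ 1 / 2 generalizing x
  · have := this (x := 1 - x) (by linarith) (by linarith) (by linarith)
    rwa [sub_sub_cancel, min_comm, mul_sub, mul_one, sin_pi_sub] at this
  have := mul_le_sin (x := π * x) (by positivity) (by nlinarith [pi_pos])
  rw [min_eq_left (by linarith)]
  calc 2 * x = 2 / π * (π * x) := by field_simp
    _ ≤ sin (π * x) := this

lemma min_div_le_sin_pi_mul {q r x : ℝ} (hr : 1 ≤ r) (hqr : 1 ≤ q - r)
    (hx : |x - r / q| ≤ 1 / (2 * q)) : min r (q - r) / q ≤ sin (π * x) := by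
  set m := min r (q - r)
  have hq : 0 < q := by linarith
  have hm : 1 ≤ m := le_min hr hqr
  have hhalf : m / (2 * q) ≤ m / q - 1 / (2 * q) := by
    have : m / q - 1 / (2 * q) - m / (2 * q) = (m - 1) / (2 * q) := by field_simp; ring
    linarith [div_nonneg (sub_nonneg.2 hm) (by positivity : (0 : ℝ) ≤ 2 * q)]
  have hr' : m / q ≤ r / q := div_le_div_of_nonneg_right (min_le_left _ _) hq.le
  have hqr' : m / q ≤ 1 - r / q := by
    rw [one_sub_div hq.ne']; exact div_le_div_of_nonneg_right (min_le_right _ _) hq.le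
  obtain ⟨hx₁, hx₂⟩ := abs_le.1 hx
  have hmin : m / (2 * q) ≤ min x (1 - x) := le_min (by linarith) (by linarith)
  have hpos : 0 ≤ m / (2 * q) := by positivity
  calc m / q = 2 * (m / (2 * q)) := by field_simp
    _ ≤ 2 * min x (1 - x) := by gcongr
    _ ≤ sin (π * x) := two_mul_min_le_sin_pi_mul (by linarith [min_le_left x (1 - x)])
        (by linarith [min_le_right x (1 - x)])

lemma abs_log_two_sin_pi_mul_sub_le {q r x : ℝ} (hr : 1 ≤ r) (hqr : 1 ≤ q - r)
    (hx : |x - r / q| ≤ 1 / (2 * q)) :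
    |log (2 * sin (π * x)) - log (2 * sin (π * (r / q)))| ≤ 2 * (r⁻¹ + (q - r)⁻¹) := by
  set m := min r (q - r)
  have hq : 0 < q := by linarith
  have hm : 0 < m := lt_of_lt_of_le one_pos (le_min hr hqr)
  have hmq : 0 < 2 * m / q := by positivity
  have ha : 2 * m / q ≤ 2 * sin (π * x) := by
    rw [mul_div_assoc]; gcongr; exact min_div_le_sin_pi_mul hr hqr hx
  have hb : 2 * m / q ≤ 2 * sin (π * (r / q)) := by
    rw [mul_div_assoc]; gcongr
    exact min_div_le_sin_pi_mul hr hqr (by rw [sub_self, abs_zero]; positivity)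
  have hab : |2 * sin (π * x) - 2 * sin (π * (r / q))| ≤ π / q :=
    calc |2 * sin (π * x) - 2 * sin (π * (r / q))| = 2 * |sin (π * x) - sin (π * (r / q))| := by
          rw [← mul_sub, abs_mul, abs_two]
      _ ≤ 2 * |π * x - π * (r / q)| := by linarith [abs_sin_sub_sin_le (π * x) (π * (r / q))]
      _ = 2 * π * |x - r / q| := by rw [← mul_sub, abs_mul, abs_of_pos pi_pos, mul_assoc]
      _ ≤ 2 * π * (1 / (2 * q)) := by gcongr
      _ = π / q := by field_simp
  have hm_inv : m⁻¹ ≤ r⁻¹ + (q - r)⁻¹ := by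
    have : 0 < r⁻¹ := by positivity
    have : 0 < (q - r)⁻¹ := inv_pos.2 (by linarith)
    obtain h | h : m = r ∨ m = q - r := min_choice _ _ <;> rw [h] <;> linarith
  calc |log (2 * sin (π * x)) - log (2 * sin (π * (r / q)))|
      ≤ |2 * sin (π * x) - 2 * sin (π * (r / q))| / min (2 * sin (π * x)) (2 * sin (π * (r / q))) :=
        abs_log_sub_log_le (hmq.trans_le ha) (hmq.trans_le hb)
    _ ≤ (π / q) / (2 * m / q) := by gcongr; exact le_min ha hb
    _ = π / 2 * m⁻¹ := by field_simp
    _ ≤ 2 * m⁻¹ := by gcongr; linarith [pi_lt_four]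
    _ ≤ 2 * (r⁻¹ + (q - r)⁻¹) := by gcongr

lemma log_two_sub_two_cos_eq (x : ℝ) :
    log (2 - 2 * cos (2 * π * x)) = 2 * log (2 * sin (π * x)) := by
  have : 2 - 2 * cos (2 * π * x) = (2 * sin (π * x)) ^ 2 := by
    rw [mul_assoc, cos_two_mul, cos_sq']; ring
  rw [this, log_pow, Nat.cast_ofNat]

lemma abs_log_two_sub_two_cos_sub_le {α : ℝ} {p q j N r : ℕ} (hjq : j ≤ q)
    (hα : q * |q * α - p| ≤ 1 / 2) (hjp : j * p = N * q + r) (hr : 1 ≤ r) (hrq : r < q) :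
    |log (2 - 2 * cos (2 * π * (j * α))) - 2 * log (2 * sin (π * (r / q)))|
      ≤ 4 * ((r : ℝ)⁻¹ + ((q : ℝ) - r)⁻¹) := by
  have hq : (0 : ℝ) < q := by exact_mod_cast (by omega : 0 < q)
  set x : ℝ := j * α - N
  have hx : |x - r / q| ≤ 1 / (2 * q) := by
    have hjp' : (j : ℝ) * p = N * q + r := by exact_mod_cast hjp
    have : x - r / q = j * (q * α - p) / q := by field_simp; linear_combination hjp'
    rw [this, abs_div, abs_mul, Nat.abs_cast, abs_of_pos hq, div_le_div_iff₀ hq (by positivity)]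
    have : (j : ℝ) ≤ q := by exact_mod_cast hjq
    nlinarith [abs_nonneg ((q : ℝ) * α - p)]
  have hcos : cos (2 * π * (j * α)) = cos (2 * π * x) := by
    rw [← cos_add_nat_mul_two_pi (2 * π * x) N]; congr 1; simp only [x]; ring
  rw [hcos, log_two_sub_two_cos_eq, ← mul_sub, abs_mul, abs_two]
  have := abs_log_two_sin_pi_mul_sub_le (q := q) (by exact_mod_cast hr)
    (by rw [← Nat.cast_sub hrq.le]; exact_mod_cast (by omega : 1 ≤ q - r)) hx
  linarith

lemma sin_pi_mul_div_pos {q r : ℝ} (hr : 0 < r) (hrq : r < q) : 0 < sin (π * (r / q)) :=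
  sin_pos_of_pos_of_lt_pi (by have := hr.trans hrq; positivity)
    (mul_lt_of_lt_one_right pi_pos ((div_lt_one (hr.trans hrq)).2 hrq))

lemma prod_two_sin_pi_mul_div {q : ℕ} (hq : 0 < q) :
    ∏ r ∈ Icc 1 (q - 1), 2 * sin (π * (r / q)) = q := by
  obtain ⟨m, rfl⟩ : ∃ m, q = m + 1 := ⟨q - 1, by omega⟩
  have hμ := Complex.isPrimitiveRoot_exp (m + 1) m.succ_ne_zero
  have key := congrArg (‖·‖) hμ.prod_one_sub_pow_eq_order
  have hterm (k : ℕ) (hk : k ∈ range m) :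
      ‖1 - Complex.exp (2 * π * Complex.I / ↑(m + 1)) ^ (k + 1)‖
        = 2 * sin (π * ((k + 1 : ℕ) / (m + 1 : ℕ))) := by
    have hθ : ((k + 1 : ℕ) : ℂ) * (2 * π * Complex.I / ↑(m + 1))
        = Complex.I * ↑(2 * (π * ((k + 1 : ℕ) / (m + 1 : ℕ)))) := by
      push_cast; field_simp
    rw [← Complex.exp_nat_mul, hθ, norm_sub_rev, Complex.norm_exp_I_mul_ofReal_sub_one,
      mul_div_cancel_left₀ _ two_ne_zero, norm_of_nonneg]
    exact mul_nonneg zero_le_two (sin_pi_mul_div_pos (by positivity)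
      (by have := mem_range.1 hk; exact_mod_cast (by omega : k + 1 < m + 1))).le
  simp only [norm_prod, prod_congr rfl hterm] at key
  rw [range_eq_Ico, prod_Ico_add' (fun r : ℕ ↦ 2 * sin (π * (r / (m + 1 : ℕ)))) 0 m 1, zero_add,
    Ico_add_one_right_eq_Icc, ← Nat.cast_add_one, Complex.norm_natCast] at key
  rwa [Nat.add_sub_cancel]

lemma sum_log_two_sin_pi_mul_div {q : ℕ} (hq : 0 < q) :
    ∑ r ∈ Icc 1 (q - 1), log (2 * sin (π * (r / q))) = log q := by
  rw [← log_prod, prod_two_sin_pi_mul_div hq]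
  intro r hr
  have := mem_Icc.1 hr
  exact (mul_pos two_pos (sin_pi_mul_div_pos (by exact_mod_cast this.1)
    (by exact_mod_cast (by omega : r < q)))).ne'

lemma sum_Icc_inv_add_inv_sub_le (q : ℕ) :
    ∑ r ∈ Icc 1 (q - 1), ((r : ℝ)⁻¹ + ((q : ℝ) - r)⁻¹) ≤ 2 * (1 + log q) := by
  have hreflect : ∑ r ∈ Icc 1 (q - 1), ((q : ℝ) - r)⁻¹ = ∑ r ∈ Icc 1 (q - 1), (r : ℝ)⁻¹ := by
    refine sum_nbij' (q - ·) (q - ·) ?_ ?_ ?_ ?_ ?_ <;> intro r hr <;>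
      simp only [mem_Icc] at hr ⊢ <;> try omega
    rw [Nat.cast_sub (by omega)]
  have hharmonic : ∑ r ∈ Icc 1 (q - 1), (r : ℝ)⁻¹ ≤ 1 + log q :=
    calc ∑ r ∈ Icc 1 (q - 1), (r : ℝ)⁻¹ ≤ ∑ r ∈ Icc 1 q, (r : ℝ)⁻¹ :=
          sum_le_sum_of_subset_of_nonneg (Icc_subset_Icc_right (Nat.sub_le q 1))
            (fun _ _ _ ↦ by positivity)
      _ = harmonic q := by simp [harmonic_eq_sum_Icc]
      _ ≤ 1 + log q := harmonic_le_one_add_log q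
  rw [sum_add_distrib, hreflect]
  linarith

lemma mul_mod_mem_Icc {p q j : ℕ} (hpq : p.Coprime q) (hj : j ∈ Icc 1 (q - 1)) :
    j * p % q ∈ Icc 1 (q - 1) := by
  rw [mem_Icc] at hj ⊢
  have hne : j * p % q ≠ 0 := fun h ↦ by
    have := Nat.le_of_dvd (by omega) (hpq.symm.dvd_of_dvd_mul_right (Nat.dvd_of_mod_eq_zero h))
    omega
  have := Nat.mod_lt (j * p) (by omega : 0 < q)
  omega

lemma sum_Icc_mul_mod_eq {M : Type*} [AddCommMonoid M] {p q : ℕ} (hpq : p.Coprime q)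
    (f : ℕ → M) : ∑ j ∈ Icc 1 (q - 1), f (j * p % q) = ∑ r ∈ Icc 1 (q - 1), f r := by
  have hmaps : Set.MapsTo (· * p % q) (Icc 1 (q - 1) : Set ℕ) (Icc 1 (q - 1)) :=
    fun _ hj ↦ mul_mod_mem_Icc hpq hj
  have hinj : Set.InjOn (· * p % q) (Icc 1 (q - 1) : Set ℕ) := by
    intro a ha b hb hab
    simp only [coe_Icc, Set.mem_Icc] at ha hb
    have := Nat.ModEq.cancel_right_of_coprime hpq.symm (hab : a * p ≡ b * p [MOD q])
    rwa [Nat.ModEq, Nat.mod_eq_of_lt (by omega), Nat.mod_eq_of_lt (by omega)] at this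
  exact sum_nbij _ hmaps hinj (surjOn_of_injOn_of_card_le _ hmaps hinj le_rfl) fun _ _ ↦ rfl

theorem abs_sum_log_two_sub_two_cos_sub_two_log_le {α : ℝ} {p q : ℕ} (hq : 0 < q)
    (hpq : p.Coprime q) (hα : q * |q * α - p| ≤ 1 / 2) :
    |∑ j ∈ Icc 1 (q - 1), log (2 - 2 * cos (2 * π * (j * α))) - 2 * log q| ≤ 8 * (1 + log q) := by
  set B : ℕ → ℝ := fun r ↦ 2 * log (2 * sin (π * (r / q)))
  set E : ℕ → ℝ := fun r ↦ 4 * ((r : ℝ)⁻¹ + ((q : ℝ) - r)⁻¹)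
  have hB : ∑ j ∈ Icc 1 (q - 1), B (j * p % q) = 2 * log q := by
    rw [sum_Icc_mul_mod_eq hpq B, ← mul_sum, sum_log_two_sin_pi_mul_div hq]
  have hE : ∑ j ∈ Icc 1 (q - 1), E (j * p % q) ≤ 8 * (1 + log q) := by
    rw [sum_Icc_mul_mod_eq hpq E, ← mul_sum]
    linarith [sum_Icc_inv_add_inv_sub_le q]
  rw [← hB, ← sum_sub_distrib]
  refine (abs_sum_le_sum_abs _ _).trans ((sum_le_sum fun j hj ↦ ?_).trans hE)
  have hr := mul_mod_mem_Icc hpq hj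
  rw [mem_Icc] at hj hr
  exact abs_log_two_sub_two_cos_sub_le (by omega) hα (Nat.div_add_mod' (j * p) q).symm hr.1
    (by omega)

lemma fib_mul_abs_fib_mul_neg_goldenConj_sub_fib_le {n : ℕ} (hn : 3 ≤ n) :
    (Nat.fib n : ℝ) * |Nat.fib n * -ψ - Nat.fib (n - 1)| ≤ 1 / 2 := by
  obtain ⟨m, rfl⟩ : ∃ m, n = m + 1 := ⟨n - 1, by omega⟩
  have hdiff : (Nat.fib (m + 1) : ℝ) * -ψ - Nat.fib m = -ψ ^ (m + 1) := by
    linear_combination -goldenConj_mul_fib_succ_add_fib m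
  rw [Nat.add_sub_cancel, hdiff, abs_neg, abs_pow, abs_of_neg goldenConj_neg]
  have hbinet : √5 * (Nat.fib (m + 1) * (-ψ) ^ (m + 1)) = 1 - (-ψ ^ 2) ^ (m + 1) := by
    have hprod : (φ ^ (m + 1) - ψ ^ (m + 1)) * (-ψ) ^ (m + 1) = 1 - (-ψ ^ 2) ^ (m + 1) := by
      rw [sub_mul, ← mul_pow, ← mul_pow, show φ * -ψ = 1 by linarith [goldenRatio_mul_goldenConj],
        one_pow, mul_neg, ← sq]
    rw [coe_fib_eq, div_mul_eq_mul_div, mul_div_cancel₀ _ (by positivity), hprod]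
  have hψsq : (ψ ^ 2) ^ (m + 1) ≤ (ψ ^ 2) ^ 3 :=
    pow_le_pow_of_le_one (by positivity) (by nlinarith [goldenConj_neg, neg_one_lt_goldenConj]) hn
  have hneg : -(ψ ^ 2) ^ (m + 1) ≤ (-ψ ^ 2) ^ (m + 1) := by
    have := neg_abs_le ((-ψ ^ 2) ^ (m + 1))
    rwa [abs_pow, abs_neg, abs_sq] at this
  have h5 : √5 ^ 2 = 5 := sq_sqrt (by norm_num)
  have hψ6 : (ψ ^ 2) ^ 3 = 9 - 4 * √5 := by
    rw [goldenConj_sq, goldenConj]; linear_combination (9 - √5) / 8 * h5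
  have h5' : 20 ≤ 9 * √5 := by nlinarith [sqrt_nonneg 5]
  refine le_of_mul_le_mul_left ?_ (by positivity : (0 : ℝ) < √5)
  linarith

/-- For the golden mean `α = (√5 - 1)/2`, `g x = log (2 - 2 cos (2π x))` and the Birkhoff
sums `S k = ∑_{j=1}^{k} g (j α)`, there is a constant `C > 0` such that
`|S (F n - 1)| ≤ C log (F n)` for all `n ≥ 3`, where `F n` are the Fibonacci numbers. -/
theorem birkhoff_sum_fib_sub_one_log_bound (α : ℝ) (hα : α = (Real.sqrt 5 - 1) / 2)
    (g : ℝ → ℝ) (hg : ∀ x, g x = Real.log (2 - 2 * Real.cos (2 * Real.pi * x)))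
    (S : ℕ → ℝ) (hS : ∀ k, S k = ∑ j ∈ Finset.Icc 1 k, g (j * α)) :
    ∃ C > 0, ∀ n : ℕ, 3 ≤ n → |S (Nat.fib n - 1)| ≤ C * Real.log (Nat.fib n) := by
  have hαψ : α = -ψ := by rw [hα, goldenConj]; ring
  refine ⟨22, by norm_num, fun n hn ↦ ?_⟩
  have hq : 2 ≤ Nat.fib n := Nat.fib_mono hn
  have hcop : (Nat.fib (n - 1)).Coprime (Nat.fib n) := by
    obtain ⟨m, rfl⟩ : ∃ m, n = m + 1 := ⟨n - 1, by omega⟩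
    exact Nat.fib_coprime_fib_succ m
  have hbound := abs_sum_log_two_sub_two_cos_sub_two_log_le (by omega) hcop
    (hαψ ▸ fib_mul_abs_fib_mul_neg_goldenConj_sub_fib_le hn)
  have hlog : log 2 ≤ log (Nat.fib n) := log_le_log two_pos (by exact_mod_cast hq)
  simp only [hS, hg]
  obtain ⟨hlo, hhi⟩ := abs_le.1 hbound
  rw [abs_le]
  constructor <;> linarith [log_two_gt_d9]
end

section
/- Let α = (√5 - 1)/2, g(x) = log(2 - 2cos(2πx)), S_k(α) = ∑_{j=1}^{k} g(jα), and let F_n be the Fibonacci numbers. If the sequence S_{F_n}(α) is bounded, then lim_{n→∞} S_{F_n}(α)/log F_n = 0 and lim_{n→∞} S_{F_n - 1}(α)/log F_n = 2. -/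
open Real Filter Topology Asymptotics goldenRatio

/-!
Write `α = -ψ = φ⁻¹`. Since `ψ F_{n+1} + F_n = ψ^{n+1}`, the point `F_n α` lies within `|ψ|^n` of an
integer, so `g (F_n α) = g (ψ^n)`; and `2 - 2 cos (2π y) = (2π y sinc (π y))²` gives
`g y = 2 log |y| + 2 log (2π) + o(1)` as `y → 0`. By Binet's formula `F_n |ψ|^n → 1/√5`, hence
`g (F_n α) = -2 log F_n + O(1)`. Peeling off the last term, `S (F_n - 1) = S (F_n) - g (F_n α)`, which
is `2 log F_n + O(1)` when `S (F_n)` is bounded; divide by `log F_n → ∞`.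
-/

lemma two_sub_two_cos_two_pi_mul (y : ℝ) :
    2 - 2 * cos (2 * π * y) = (2 * π * y * sinc (π * y)) ^ 2 := by
  rcases eq_or_ne y 0 with rfl | hy
  · simp
  rw [sinc_of_ne_zero (by positivity), show 2 * π * y = 2 * (π * y) by ring, cos_two_mul]
  field_simp
  nlinarith [sin_sq_add_cos_sq (π * y)]

lemma tendsto_log_two_sub_two_cos_sub_two_log_abs :
    Tendsto (fun y => log (2 - 2 * cos (2 * π * y)) - 2 * log |y|) (𝓝[≠] 0)
      (𝓝 (2 * log (2 * π))) := by
  have hsinc : Tendsto (fun y => 2 * log (2 * π * sinc (π * y))) (𝓝 0) (𝓝 (2 * log (2 * π))) := by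
    have h := (continuous_sinc.comp (continuous_const_mul π)).tendsto 0
    simpa using ((h.const_mul (2 * π)).log (by simp [pi_ne_zero])).const_mul 2
  refine (hsinc.mono_left nhdsWithin_le_nhds).congr' ?_
  have hpos : ∀ᶠ y in 𝓝 (0 : ℝ), 0 < sinc (π * y) :=
    continuousAt_const.eventually_lt (continuous_sinc.comp (continuous_const_mul π)).continuousAt
      (by simp)
  filter_upwards [nhdsWithin_le_nhds hpos, self_mem_nhdsWithin] with y hy hy0
  rw [two_sub_two_cos_two_pi_mul, log_pow, log_abs,
    show 2 * π * y * sinc (π * y) = y * (2 * π * sinc (π * y)) by ring, log_mul hy0 (by positivity)]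
  push_cast
  ring

lemma cos_two_pi_mul_fib_mul_neg_goldenConj (n : ℕ) :
    cos (2 * π * (Nat.fib n * -ψ)) = cos (2 * π * ψ ^ n) := by
  cases n with
  | zero => simp
  | succ n =>
    have h : (Nat.fib (n + 1) : ℝ) * -ψ = Nat.fib n - ψ ^ (n + 1) := by
      linarith [goldenConj_mul_fib_succ_add_fib n]
    rw [h, mul_sub, show 2 * π * (Nat.fib n : ℝ) = Nat.fib n * (2 * π) by ring,
      cos_nat_mul_two_pi_sub]

lemma fib_mul_neg_goldenConj_pow (n : ℕ) :
    Nat.fib n * (-ψ) ^ n = (1 - (-ψ ^ 2) ^ n) / √5 := by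
  rw [coe_fib_eq, div_mul_eq_mul_div, sub_mul, ← mul_pow, ← mul_pow,
    show φ * -ψ = 1 by linarith [goldenRatio_mul_goldenConj], one_pow]
  ring

lemma abs_goldenConj_lt_one : |ψ| < 1 :=
  abs_lt.2 ⟨neg_one_lt_goldenConj, goldenConj_neg.trans one_pos⟩

lemma tendsto_fib_mul_neg_goldenConj_pow :
    Tendsto (fun n => Nat.fib n * (-ψ) ^ n) atTop (𝓝 (1 / √5)) := by
  have hψ : |-ψ ^ 2| < 1 := by
    rw [abs_neg, abs_pow]
    exact pow_lt_one₀ (abs_nonneg _) abs_goldenConj_lt_one two_ne_zero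
  simp_rw [fib_mul_neg_goldenConj_pow]
  simpa using ((tendsto_pow_atTop_nhds_zero_of_abs_lt_one hψ).const_sub 1).div_const √5

lemma tendsto_log_two_sub_two_cos_fib_mul_add_two_log_fib :
    Tendsto (fun n : ℕ => log (2 - 2 * cos (2 * π * (Nat.fib n * -ψ))) + 2 * log (Nat.fib n))
      atTop (𝓝 (2 * log (2 * π) + 2 * log (1 / √5))) := by
  have hpow : Tendsto (ψ ^ ·) atTop (𝓝[≠] 0) :=
    tendsto_nhdsWithin_iff.2 ⟨tendsto_pow_atTop_nhds_zero_of_abs_lt_one abs_goldenConj_lt_one,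
      Eventually.of_forall fun n => pow_ne_zero n goldenConj_ne_zero⟩
  refine ((tendsto_log_two_sub_two_cos_sub_two_log_abs.comp hpow).add
    ((tendsto_fib_mul_neg_goldenConj_pow.log (by positivity)).const_mul 2)).congr' ?_
  filter_upwards [eventually_gt_atTop 0] with n hn
  have hfib : (Nat.fib n : ℝ) ≠ 0 := by exact_mod_cast (Nat.fib_pos.2 hn).ne'
  rw [Function.comp_apply, abs_pow, abs_of_neg goldenConj_neg,
    log_mul hfib (pow_ne_zero n (neg_ne_zero.2 goldenConj_ne_zero)),
    cos_two_pi_mul_fib_mul_neg_goldenConj]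
  ring

lemma tendsto_log_fib_atTop : Tendsto (fun n => log (Nat.fib n)) atTop atTop :=
  tendsto_log_atTop.comp <| tendsto_natCast_atTop_atTop.comp <|
    tendsto_atTop_mono' atTop ((eventually_ge_atTop 5).mono fun _ => Nat.le_fib_self) tendsto_id

lemma Asymptotics.IsBigO.tendsto_div_nhds_zero_of_tendsto_atTop {ι : Type*} {l : Filter ι}
    {f L : ι → ℝ} (hf : f =O[l] fun _ => (1 : ℝ)) (hL : Tendsto L l atTop) :
    Tendsto (fun i => f i / L i) l (𝓝 0) :=
  (hf.trans_isLittleO <| (isLittleO_one_left_iff ℝ).2 <|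
    tendsto_abs_atTop_atTop.comp hL).tendsto_div_nhds_zero

/-- For the golden mean `α`, `g x = log (2 - 2 cos (2π x))`, Birkhoff sums
`S k = ∑_{j=1}^{k} g (j α)` and the Fibonacci numbers `F n`: if the sequence `S (F n)` is
bounded then `S (F n) / log (F n) → 0` and `S (F n - 1) / log (F n) → 2`. -/
theorem birkhoff_sum_fib_normalized_limits (α : ℝ) (hα : α = (Real.sqrt 5 - 1) / 2)
    (g : ℝ → ℝ) (hg : ∀ x, g x = Real.log (2 - 2 * Real.cos (2 * Real.pi * x)))
    (S : ℕ → ℝ) (hS : ∀ k, S k = ∑ j ∈ Finset.Icc 1 k, g (j * α))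
    (hbdd : ∃ B : ℝ, ∀ n : ℕ, |S (Nat.fib n)| ≤ B) :
    Tendsto (fun n : ℕ => S (Nat.fib n) / Real.log (Nat.fib n)) atTop (nhds 0) ∧
    Tendsto (fun n : ℕ => S (Nat.fib n - 1) / Real.log (Nat.fib n)) atTop (nhds 2) := by
  obtain ⟨B, hB⟩ := hbdd
  have hα' : α = -ψ := by rw [hα]; ring
  have hS_fib : (fun n => S (Nat.fib n)) =O[atTop] fun _ => (1 : ℝ) :=
    .of_bound B (Eventually.of_forall fun n => by simpa using hB n)
  have hg_fib : (fun n => g (Nat.fib n * α) + 2 * log (Nat.fib n)) =O[atTop] fun _ => (1 : ℝ) := by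
    simp only [hg, hα']
    exact tendsto_log_two_sub_two_cos_fib_mul_add_two_log_fib.isBigO_one ℝ
  refine ⟨hS_fib.tendsto_div_nhds_zero_of_tendsto_atTop tendsto_log_fib_atTop, ?_⟩
  have h := ((hS_fib.sub hg_fib).tendsto_div_nhds_zero_of_tendsto_atTop
    tendsto_log_fib_atTop).add_const 2
  rw [zero_add] at h
  refine h.congr' ?_
  filter_upwards [eventually_gt_atTop 0, tendsto_log_fib_atTop.eventually_gt_atTop 0]
    with n hn hlog
  have hsplit : S (Nat.fib n) = S (Nat.fib n - 1) + g (Nat.fib n * α) := by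
    obtain ⟨k, hk⟩ := Nat.exists_eq_add_one_of_ne_zero (Nat.fib_pos.2 hn).ne'
    rw [hS, hS, hk, Nat.add_sub_cancel, Finset.sum_Icc_succ_top (Nat.le_add_left 1 k)]
  rw [hsplit]
  field_simp
  ring
end

section
/- Let α = (√5 - 1)/2, g(x) = log(2 - 2cos(2πx)) and S_k(α) = ∑_{j=1}^{k} g(jα). Then lim_{k→∞} S_k(α)/k = 0. -/
/-!
Write `log (2 - 2 cos 2πx) = 2 log ‖1 - e(x)‖` with `e(x) = exp (2πix)` and truncate the series
`log ‖1 - z‖ = -Re ∑_{n ≥ 1} zⁿ / n` after `M` terms; Abel summation bounds the error at `z = e(x)`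
by `O(1 / (M ‖x‖))`, where `‖x‖` is the distance from `x` to the nearest integer. Along `x = jα`,
`j ≤ k`, the truncated series becomes `∑_{n ≤ M} n⁻¹ ∑_{j ≤ k} e(nα)ʲ = O(M)`, each geometric
sum being `O(1 / ‖nα‖) = O(n)`, while the errors add up to `O(M⁻¹ ∑_{j ≤ k} 1 / ‖jα‖)`. The
golden mean is badly approximable, `‖mα‖ ≥ 1 / (4m)`, so the points `‖jα‖`, `j ≤ k`, are
`1 / (8k)`-separated and `∑_{j ≤ k} 1 / ‖jα‖ = O(k log k)`. Choosing `M ≈ √k` gives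
`S_k = O(√k log k)`.
-/

open Real Finset Filter Topology
open scoped goldenRatio

theorem norm_sum_Ico_smul_le_of_antitoneOn {E : Type*} [SeminormedAddCommGroup E] [NormedSpace ℝ E]
    {f : ℕ → ℝ} {g : ℕ → E} {B : ℝ} {m : ℕ} (hf : AntitoneOn f (Set.Ici m))
    (hf₀ : ∀ i, 0 ≤ f i) (hg : ∀ n, ‖∑ i ∈ range n, g i‖ ≤ B) (n : ℕ) :
    ‖∑ i ∈ Ico m n, f i • g i‖ ≤ 2 * B * f m := by
  have hB : 0 ≤ B := (norm_nonneg _).trans (hg 0)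
  rcases le_or_gt n m with hnm | hmn
  · simpa [Ico_eq_empty_of_le hnm] using mul_nonneg (by positivity) (hf₀ m)
  have hstep : ∀ i ∈ Ico m (n - 1), ‖(f (i + 1) - f i) • ∑ l ∈ range (i + 1), g l‖
      ≤ (f i - f (i + 1)) * B := fun i hi => by
    have hle : f (i + 1) ≤ f i :=
      hf (mem_Ico.1 hi).1 ((mem_Ico.1 hi).1.trans (Nat.le_succ i)) (Nat.le_succ i)
    rw [norm_smul, Real.norm_eq_abs, abs_of_nonpos (by linarith), neg_sub]
    exact mul_le_mul_of_nonneg_left (hg _) (by linarith)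
  rw [sum_Ico_by_parts f g hmn]
  calc _ ≤ ‖f (n - 1) • ∑ i ∈ range n, g i‖ + ‖f m • ∑ i ∈ range m, g i‖
        + ∑ i ∈ Ico m (n - 1), ‖(f (i + 1) - f i) • ∑ l ∈ range (i + 1), g l‖ :=
        (norm_sub_le _ _).trans (add_le_add (norm_sub_le _ _) (norm_sum_le _ _))
    _ ≤ f (n - 1) * B + f m * B + ∑ i ∈ Ico m (n - 1), (f i - f (i + 1)) * B := by
        rw [norm_smul, norm_smul, Real.norm_eq_abs, Real.norm_eq_abs, abs_of_nonneg (hf₀ _),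
          abs_of_nonneg (hf₀ _)]
        exact add_le_add (add_le_add (mul_le_mul_of_nonneg_left (hg _) (hf₀ _))
          (mul_le_mul_of_nonneg_left (hg _) (hf₀ _))) (sum_le_sum hstep)
    _ = 2 * B * f m := by
        have htel := sum_Ico_sub f (show m ≤ n - 1 by omega)
        rw [← sum_mul, sum_sub_distrib]
        rw [sum_sub_distrib] at htel
        linear_combination (-B) * htel

theorem norm_sum_Ico_pow_le {𝕜 : Type*} [NormedDivisionRing 𝕜] {z : 𝕜} (hz : ‖z‖ ≤ 1)
    (hz₁ : z ≠ 1) (m n : ℕ) : ‖∑ i ∈ Ico m n, z ^ i‖ ≤ 2 / ‖1 - z‖ := by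
  have hpos : 0 < ‖1 - z‖ := norm_pos_iff.2 (sub_ne_zero.2 hz₁.symm)
  rcases le_or_gt n m with hnm | hmn
  · simpa [Ico_eq_empty_of_le hnm] using by positivity
  rw [geom_sum_Ico hz₁ hmn.le, norm_div, ← norm_neg (z - 1), neg_sub]
  gcongr
  calc ‖z ^ n - z ^ m‖ ≤ ‖z ^ n‖ + ‖z ^ m‖ := norm_sub_le _ _
    _ ≤ 1 + 1 := by rw [norm_pow, norm_pow]; gcongr <;> exact pow_le_one₀ (norm_nonneg _) hz
    _ = 2 := by norm_num

namespace Complex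

-- The `n = 0` term of the sums `∑ n ∈ range (M + 1), z ^ n / n` is `z ^ 0 / 0 = 0`.
theorem norm_log_one_sub_add_sum_le {z : ℂ} (hz : ‖z‖ ≤ 1) (hz₁ : z ≠ 1) {r : ℝ} (hr₀ : 0 ≤ r)
    (hr₁ : r < 1) (M : ℕ) :
    ‖log (1 - r * z) + ∑ n ∈ range (M + 1), (r * z) ^ n / n‖ ≤ 4 / ((M + 1) * ‖1 - z‖) := by
  have hrz : ‖(r : ℂ) * z‖ < 1 := by
    rw [norm_mul, norm_real, Real.norm_of_nonneg hr₀]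
    nlinarith [norm_nonneg z]
  have htail : Tendsto (fun N => ∑ n ∈ Ico (M + 1) N, (r * z) ^ n / n) atTop
      (𝓝 (-log (1 - r * z) - ∑ n ∈ range (M + 1), (r * z) ^ n / n)) := by
    refine ((hasSum_taylorSeries_neg_log hrz).tendsto_sum_nat.sub tendsto_const_nhds).congr' ?_
    filter_upwards [eventually_ge_atTop (M + 1)] with N hN
    rw [sum_Ico_eq_sub _ hN]
  have hcoeff : AntitoneOn (fun n : ℕ => r ^ n / n) (Set.Ici (M + 1)) := by
    intro i hi j _ hij
    have hi₀ : (0 : ℝ) < i := by exact_mod_cast (Nat.succ_pos M).trans_le hi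
    exact div_le_div₀ (by positivity) (pow_le_pow_of_le_one hr₀ hr₁.le hij) hi₀
      (by exact_mod_cast hij)
  have hbound : ∀ N, ‖∑ n ∈ Ico (M + 1) N, (r * z) ^ n / n‖ ≤ 4 / ((M + 1) * ‖1 - z‖) := by
    intro N
    have hpos : 0 < ‖1 - z‖ := norm_pos_iff.2 (sub_ne_zero.2 hz₁.symm)
    have hsmul : ∀ n : ℕ, (r * z) ^ n / n = (r ^ n / n : ℝ) • z ^ n := fun n => by
      rw [real_smul]; push_cast; ring
    simp_rw [hsmul]
    calc _ ≤ 2 * (2 / ‖1 - z‖) * (r ^ (M + 1) / ↑(M + 1)) :=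
          norm_sum_Ico_smul_le_of_antitoneOn hcoeff (fun n => by positivity)
            (fun n => by simpa using norm_sum_Ico_pow_le hz hz₁ 0 n) N
      _ ≤ 2 * (2 / ‖1 - z‖) * (1 / (M + 1)) := by
          push_cast
          gcongr
          exact pow_le_one₀ hr₀ hr₁.le
      _ = 4 / ((M + 1) * ‖1 - z‖) := by field_simp; ring
  rw [← norm_neg, neg_add, ← sub_eq_add_neg]
  exact le_of_tendsto' htail.norm hbound

theorem abs_log_norm_one_sub_add_re_sum_le {z : ℂ} (hz : ‖z‖ = 1) (hz₁ : z ≠ 1) (M : ℕ) :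
    |Real.log ‖1 - z‖ + (∑ n ∈ range (M + 1), z ^ n / n).re| ≤ 4 / ((M + 1) * ‖1 - z‖) := by
  -- The log series need not converge on the unit circle: let `r → 1⁻` in the bound at `r * z`.
  set F : ℝ → ℝ := fun r => Real.log ‖1 - r * z‖ + (∑ n ∈ range (M + 1), (r * z) ^ n / n).re
  have hcont : ContinuousAt F 1 := by
    have h1 : ‖1 - ((1 : ℝ) : ℂ) * z‖ ≠ 0 := by simpa [sub_eq_zero] using hz₁.symm
    have hnorm : ContinuousAt (fun r : ℝ => ‖1 - r * z‖) 1 := by fun_prop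
    exact (hnorm.log h1).add (by fun_prop)
  have hF : ∀ r ∈ Set.Ico (0 : ℝ) 1, |F r| ≤ 4 / ((M + 1) * ‖1 - z‖) := fun r hr =>
    calc |F r| = |(log (1 - r * z) + ∑ n ∈ range (M + 1), (r * z) ^ n / n).re| := by
          rw [add_re, log_re]
      _ ≤ _ := (abs_re_le_norm _).trans (norm_log_one_sub_add_sum_le hz.le hz₁ hr.1 hr.2 M)
  have hlim : Tendsto F (𝓝[<] 1) (𝓝 (F 1)) := hcont.continuousWithinAt.tendsto
  simpa [F] using le_of_tendsto hlim.abs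
    (mem_of_superset (Ico_mem_nhdsLT zero_lt_one) hF)

theorem norm_one_sub_exp_ofReal_mul_I (θ : ℝ) : ‖1 - exp (θ * I)‖ = 2 * |Real.sin (θ / 2)| := by
  rw [← norm_neg, neg_sub, mul_comm, norm_exp_I_mul_ofReal_sub_one, norm_mul, Real.norm_two,
    Real.norm_eq_abs]

theorem log_two_sub_two_cos (θ : ℝ) :
    Real.log (2 - 2 * Real.cos θ) = 2 * Real.log ‖1 - exp (θ * I)‖ := by
  have hsq : 2 - 2 * Real.cos θ = (2 * |Real.sin (θ / 2)|) ^ 2 := by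
    conv_lhs => rw [show θ = 2 * (θ / 2) by ring, Real.cos_two_mul, Real.cos_sq']
    rw [mul_pow, sq_abs]
    ring
  rw [hsq, Real.log_pow, norm_one_sub_exp_ofReal_mul_I]
  norm_num

theorem exp_two_pi_mul_I_pow (x : ℝ) (m : ℕ) :
    exp (↑(2 * π * x) * I) ^ m = exp (↑(2 * π * (m * x)) * I) := by
  rw [← exp_nat_mul]; push_cast; ring_nf

theorem four_mul_abs_sub_round_le (x : ℝ) :
    4 * |x - round x| ≤ ‖1 - exp (↑(2 * π * x) * I)‖ := by
  set t := x - round x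
  have hper : exp (↑(2 * π * x) * I) = exp (↑(2 * π * t) * I) := by
    have : (↑(2 * π * x) * I : ℂ) = ↑(2 * π * t) * I + (round x : ℤ) * (2 * π * I) := by
      simp only [t]; push_cast; ring
    rw [this, exp_add, exp_int_mul_two_pi_mul_I, mul_one]
  have ht : |π * t| ≤ π / 2 := by
    rw [abs_mul, abs_of_pos pi_pos]
    nlinarith [abs_sub_round x, pi_pos]
  rw [hper, norm_one_sub_exp_ofReal_mul_I, show 2 * π * t / 2 = π * t by ring,
    Real.abs_sin_eq_sin_abs_of_abs_le_pi (ht.trans (by linarith [pi_pos])), abs_mul,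
    abs_of_pos pi_pos]
  have := Real.mul_le_sin (abs_nonneg _) ht
  rw [abs_mul, abs_of_pos pi_pos] at this
  field_simp at this
  linarith

end Complex

theorem abs_sum_log_norm_one_sub_add_re_sum_le {ι : Type*} (s : Finset ι) {w : ι → ℂ}
    (hw : ∀ i ∈ s, ‖w i‖ = 1) (hw₁ : ∀ i ∈ s, w i ≠ 1) (M : ℕ) :
    |∑ i ∈ s, Real.log ‖1 - w i‖ + (∑ n ∈ range (M + 1), (∑ i ∈ s, w i ^ n) / n).re|
      ≤ ∑ i ∈ s, 4 / ((M + 1) * ‖1 - w i‖) := by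
  have hswap : ∑ n ∈ range (M + 1), (∑ i ∈ s, w i ^ n) / n
      = ∑ i ∈ s, ∑ n ∈ range (M + 1), w i ^ n / n := by
    simp_rw [sum_div]
    exact sum_comm
  rw [hswap, Complex.re_sum, ← sum_add_distrib]
  exact (abs_sum_le_sum_abs _ _).trans (sum_le_sum fun i hi =>
    Complex.abs_log_norm_one_sub_add_re_sum_le (hw i hi) (hw₁ i hi) M)

theorem sum_inv_le_of_separated {ι : Type*} {s : Finset ι} (hs : s.Nonempty) {x : ι → ℝ}
    {δ L : ℝ} (hδ : 0 < δ) (hx : ∀ i ∈ s, δ ≤ x i ∧ x i ≤ L)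
    (hsep : ∀ i ∈ s, ∀ j ∈ s, i ≠ j → δ ≤ |x i - x j|) :
    ∑ i ∈ s, (x i)⁻¹ ≤ δ⁻¹ * (1 + Real.log (L / δ)) := by
  -- `i ↦ ⌊x i / δ⌋₊` is injective on `s` with values in `[1, L / δ]`: compare with a harmonic sum.
  set F : ι → ℕ := fun i => ⌊x i / δ⌋₊
  have hF_le : ∀ i ∈ s, (F i : ℝ) ≤ x i / δ := fun i hi =>
    Nat.floor_le (div_nonneg (hδ.le.trans (hx i hi).1) hδ.le)
  have hF_pos : ∀ i ∈ s, 1 ≤ F i := fun i hi =>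
    Nat.le_floor (by rw [Nat.cast_one, le_div_iff₀ hδ, one_mul]; exact (hx i hi).1)
  have hF_top : ∀ i ∈ s, F i ∈ Icc 1 ⌊L / δ⌋₊ := fun i hi =>
    mem_Icc.2 ⟨hF_pos i hi, Nat.floor_le_floor (div_le_div_of_nonneg_right (hx i hi).2 hδ.le)⟩
  have hF_inj : Set.InjOn F s := by
    intro i hi j hj hij
    by_contra hne
    have h1 := Nat.lt_floor_add_one (x i / δ)
    have h2 := Nat.lt_floor_add_one (x j / δ)
    have h3 := hF_le i hi
    have h4 := hF_le j hj
    have hsep' : 1 ≤ |x i / δ - x j / δ| := by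
      rw [← sub_div, abs_div, abs_of_pos hδ, le_div_iff₀ hδ, one_mul]
      exact hsep i hi j hj hne
    simp only [F] at hij h1 h3
    rw [hij] at h1 h3
    have : |x i / δ - x j / δ| < 1 := abs_sub_lt_iff.2 ⟨by linarith, by linarith⟩
    linarith
  obtain ⟨i₀, hi₀⟩ := hs
  have hL : 0 ≤ L / δ := div_nonneg ((hδ.le.trans (hx i₀ hi₀).1).trans (hx i₀ hi₀).2) hδ.le
  have hN : (0 : ℝ) < ⌊L / δ⌋₊ := by
    exact_mod_cast (hF_pos i₀ hi₀).trans (mem_Icc.1 (hF_top i₀ hi₀)).2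
  calc ∑ i ∈ s, (x i)⁻¹ ≤ ∑ i ∈ s, δ⁻¹ * ((F i : ℕ) : ℝ)⁻¹ := by
        refine sum_le_sum fun i hi => ?_
        have hFi : (0 : ℝ) < F i := by exact_mod_cast hF_pos i hi
        rw [← mul_inv]
        exact inv_anti₀ (mul_pos hδ hFi) (by rw [← le_div_iff₀' hδ]; exact hF_le i hi)
    _ = δ⁻¹ * ∑ n ∈ s.image F, (n : ℝ)⁻¹ := by rw [mul_sum, sum_image hF_inj]
    _ ≤ δ⁻¹ * ∑ n ∈ Icc 1 ⌊L / δ⌋₊, (n : ℝ)⁻¹ := by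
        gcongr
        exact image_subset_iff.2 hF_top
    _ ≤ δ⁻¹ * (1 + Real.log (L / δ)) := by
        gcongr
        calc ∑ n ∈ Icc 1 ⌊L / δ⌋₊, (n : ℝ)⁻¹ = harmonic ⌊L / δ⌋₊ := by
              simp [harmonic_eq_sum_Icc]
          _ ≤ 1 + Real.log ⌊L / δ⌋₊ := harmonic_le_one_add_log _
          _ ≤ 1 + Real.log (L / δ) := by
              gcongr
              exact Nat.floor_le hL

theorem min_abs_sub_round_le (a b : ℝ) :
    min |a - b - round (a - b)| |a + b - round (a + b)| ≤ |(|a - round a| - |b - round b|)| := by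
  set u := a - round a
  set v := b - round b
  rcases le_total 0 (u * v) with huv | huv
  · refine min_le_of_left_le ((round_le _ (round a - round b)).trans (sq_le_sq.1 ?_))
    push_cast
    nlinarith [abs_mul_abs_self u, abs_mul_abs_self v, abs_mul u v, abs_of_nonneg huv]
  · refine min_le_of_right_le ((round_le _ (round a + round b)).trans (sq_le_sq.1 ?_))
    push_cast
    nlinarith [abs_mul_abs_self u, abs_mul_abs_self v, abs_mul u v, abs_of_nonpos huv]

def BadlyApproximableWith (c α : ℝ) : Prop :=
  ∀ m : ℕ, 0 < m → c / m ≤ |m * α - round (m * α)|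

theorem badlyApproximableWith_inv_goldenRatio : BadlyApproximableWith (1 / 4) φ⁻¹ := by
  intro m hm
  set α := φ⁻¹
  set p := round (m * α)
  have hα : α ^ 2 + α = 1 := by
    simp only [α, inv_goldenRatio, neg_sq, goldenConj_sq]; ring
  have hα₀ : 0 < α := inv_pos.2 goldenRatio_pos
  have hα₁ : α < 1 := inv_lt_one_of_one_lt₀ one_lt_goldenRatio
  have hirr : Irrational (m * α) := goldenRatio_irrational.inv.natCast_mul hm.ne'
  have hm₁ : (1 : ℝ) ≤ m := by exact_mod_cast hm
  have hfactor : (m * α - p) * (m * α + p + m) = ((m ^ 2 - p ^ 2 - p * m : ℤ) : ℝ) := by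
    push_cast; linear_combination (m : ℝ) ^ 2 * hα
  have hne : (m ^ 2 - p ^ 2 - p * m : ℤ) ≠ 0 := by
    intro h0
    rw [h0, Int.cast_zero, mul_eq_zero, sub_eq_zero, add_assoc, add_eq_zero_iff_eq_neg] at hfactor
    rcases hfactor with h | h
    · exact hirr.ne_int p h
    · exact hirr.ne_int (-(p + m)) (by push_cast; exact h)
  have hround := abs_le.1 (abs_sub_round (m * α))
  have hcofactor : |m * α + p + m| ≤ 4 * m := abs_le.2 ⟨by nlinarith, by nlinarith⟩
  have hone : (1 : ℝ) ≤ |m * α - p| * (4 * m) :=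
    calc (1 : ℝ) ≤ |((m ^ 2 - p ^ 2 - p * m : ℤ) : ℝ)| := by exact_mod_cast Int.one_le_abs hne
      _ = |m * α - p| * |m * α + p + m| := by rw [← hfactor, abs_mul]
      _ ≤ |m * α - p| * (4 * m) := by gcongr
  rw [div_div, div_le_iff₀ (by positivity)]
  linarith

theorem tendsto_add_mul_log_div_sqrt_atTop (a b : ℝ) :
    Tendsto (fun x => (a + b * Real.log x) / √x) atTop (𝓝 0) := by
  have hlog : Tendsto (fun x => Real.log x / √x) atTop (𝓝 0) := by
    refine (isLittleO_log_rpow_atTop one_half_pos).tendsto_div_nhds_zero.congr fun x => ?_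
    rw [sqrt_eq_rpow]
  have hinv : Tendsto (fun x => a / √x) atTop (𝓝 0) :=
    tendsto_const_nhds.div_atTop tendsto_sqrt_atTop
  simpa [add_div, mul_div_assoc] using hinv.add (hlog.const_mul b)

namespace BadlyApproximableWith

variable {c α : ℝ}

theorem le_abs_sub (h : BadlyApproximableWith c α) (hc : 0 ≤ c) {k i j : ℕ}
    (hi : i ∈ Icc 1 k) (hj : j ∈ Icc 1 k) (hij : j < i) :
    c / (2 * k) ≤ |(|i * α - round (i * α)| - |j * α - round (j * α)|)| := by
  rw [mem_Icc] at hi hj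
  have hdiff : (i : ℝ) * α - j * α = ((i - j : ℕ) : ℝ) * α := by
    rw [Nat.cast_sub hij.le]; ring
  have hsum : (i : ℝ) * α + j * α = ((i + j : ℕ) : ℝ) * α := by push_cast; ring
  refine le_trans (le_min ?_ ?_) (min_abs_sub_round_le _ _)
  · rw [hdiff]
    refine le_trans (div_le_div_of_nonneg_left hc (by norm_cast; omega) ?_) (h _ (by omega))
    exact_mod_cast (show i - j ≤ 2 * k by omega)
  · rw [hsum]
    refine le_trans (div_le_div_of_nonneg_left hc (by norm_cast; omega) ?_) (h _ (by omega))
    exact_mod_cast (show i + j ≤ 2 * k by omega)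

theorem sum_inv_abs_sub_round_le (h : BadlyApproximableWith c α) (hc : 0 < c) {k : ℕ}
    (hk : 0 < k) :
    ∑ j ∈ Icc 1 k, |j * α - round (j * α)|⁻¹ ≤ 2 * k / c * (1 + Real.log (k / c)) := by
  have hk' : (0 : ℝ) < k := by exact_mod_cast hk
  have hδ : 0 < c / (2 * k) := by positivity
  convert sum_inv_le_of_separated (nonempty_Icc.2 (show 1 ≤ k from hk)) hδ (L := 1 / 2)
    (fun j hj => ⟨?_, ?_⟩) (fun i hi j hj hij => ?_) using 3
  · field_simp
  · field_simp
  · rw [mem_Icc] at hj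
    refine le_trans (div_le_div_of_nonneg_left hc.le (by norm_cast; omega) ?_) (h j (by omega))
    exact_mod_cast (show j ≤ 2 * k by omega)
  · exact abs_sub_round _
  · rcases lt_or_gt_of_ne hij with hlt | hlt
    · rw [abs_sub_comm]; exact h.le_abs_sub hc.le hj hi hlt
    · exact h.le_abs_sub hc.le hi hj hlt

theorem four_mul_div_le_norm_one_sub_exp_pow (h : BadlyApproximableWith c α) {m : ℕ}
    (hm : 0 < m) :
    4 * (c / m) ≤ ‖1 - Complex.exp (↑(2 * π * α) * Complex.I) ^ m‖ := by
  rw [Complex.exp_two_pi_mul_I_pow]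
  linarith [h m hm, Complex.four_mul_abs_sub_round_le (m * α)]

theorem norm_sum_exp_pow_div_le (h : BadlyApproximableWith c α) (hc : 0 < c) (k n : ℕ) :
    ‖(∑ j ∈ Icc 1 k, (Complex.exp (↑(2 * π * α) * Complex.I) ^ n) ^ j) / n‖ ≤ 1 / (2 * c) := by
  rcases Nat.eq_zero_or_pos n with rfl | hn
  · simp only [CharP.cast_eq_zero, div_zero, norm_zero]; positivity
  set z := Complex.exp (↑(2 * π * α) * Complex.I)
  have hlow := h.four_mul_div_le_norm_one_sub_exp_pow hn
  have hn' : (0 : ℝ) < n := by exact_mod_cast hn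
  have hpos : 0 < ‖1 - z ^ n‖ := lt_of_lt_of_le (by positivity) hlow
  have hgeom : ‖∑ j ∈ Icc 1 k, (z ^ n) ^ j‖ ≤ 2 / ‖1 - z ^ n‖ := by
    rw [← Ico_add_one_right_eq_Icc]
    refine norm_sum_Ico_pow_le ?_ (fun h1 => by simp [h1] at hpos) 1 (k + 1)
    rw [Complex.exp_two_pi_mul_I_pow, Complex.norm_exp_ofReal_mul_I]
  rw [norm_div, Complex.norm_natCast, div_le_iff₀ hn']
  calc _ ≤ 2 / ‖1 - z ^ n‖ := hgeom
    _ ≤ 2 / (4 * (c / n)) := by gcongr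
    _ = 1 / (2 * c) * n := by field_simp; ring

theorem abs_sum_log_two_sub_two_cos_le (h : BadlyApproximableWith c α) (hc : 0 < c) {k : ℕ}
    (hk : 0 < k) (M : ℕ) :
    |∑ j ∈ Icc 1 k, Real.log (2 - 2 * Real.cos (2 * π * (j * α)))|
      ≤ 4 * k / c * (1 + Real.log (k / c)) / (M + 1) + (M + 1) / c := by
  set z := Complex.exp (↑(2 * π * α) * Complex.I)
  have hpos : ∀ j ∈ Icc 1 k, 0 < ‖1 - z ^ j‖ := fun j hj =>
    have hj := (mem_Icc.1 hj).1
    lt_of_lt_of_le (by positivity) (h.four_mul_div_le_norm_one_sub_exp_pow hj)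
  have htrunc := abs_sum_log_norm_one_sub_add_re_sum_le (Icc 1 k) (w := (z ^ ·))
    (fun j _ => by simp only [z, Complex.exp_two_pi_mul_I_pow, Complex.norm_exp_ofReal_mul_I])
    (fun j hj h1 => by simpa [h1] using hpos j hj) M
  set W := ∑ n ∈ range (M + 1), (∑ j ∈ Icc 1 k, (z ^ j) ^ n) / n
  have herr : ∑ j ∈ Icc 1 k, 4 / ((M + 1) * ‖1 - z ^ j‖)
      ≤ 2 * k / c * (1 + Real.log (k / c)) / (M + 1) := by
    have hterm : ∀ j ∈ Icc 1 k, 4 / ((M + 1) * ‖1 - z ^ j‖)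
        ≤ |j * α - round (j * α)|⁻¹ / (M + 1) := fun j hj => by
      have hj := (mem_Icc.1 hj).1
      have hnd : 0 < |j * α - round (j * α)| :=
        lt_of_lt_of_le (div_pos hc (by exact_mod_cast hj)) (h j hj)
      calc _ ≤ 4 / ((M + 1) * (4 * |j * α - round (j * α)|)) := by
            gcongr
            rw [Complex.exp_two_pi_mul_I_pow]
            exact Complex.four_mul_abs_sub_round_le _
        _ = |j * α - round (j * α)|⁻¹ / (M + 1) := by field_simp
    calc _ ≤ ∑ j ∈ Icc 1 k, |j * α - round (j * α)|⁻¹ / (M + 1) := sum_le_sum hterm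
      _ = (∑ j ∈ Icc 1 k, |j * α - round (j * α)|⁻¹) / (M + 1) := (sum_div ..).symm
      _ ≤ _ := by gcongr; exact h.sum_inv_abs_sub_round_le hc hk
  have hW : ‖W‖ ≤ (M + 1) / (2 * c) := by
    have hswap : W = ∑ n ∈ range (M + 1), (∑ j ∈ Icc 1 k, (z ^ n) ^ j) / n := by
      simp_rw [W, ← pow_mul, mul_comm]
    rw [hswap]
    refine (norm_sum_le _ _).trans ?_
    calc _ ≤ ∑ n ∈ range (M + 1), 1 / (2 * c) :=
          sum_le_sum fun n _ => h.norm_sum_exp_pow_div_le hc k n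
      _ = (M + 1) / (2 * c) := by simp; ring
  have hlog : ∑ j ∈ Icc 1 k, Real.log (2 - 2 * Real.cos (2 * π * (j * α)))
      = 2 * ∑ j ∈ Icc 1 k, Real.log ‖1 - z ^ j‖ := by
    rw [mul_sum]
    refine sum_congr rfl fun j _ => ?_
    rw [Complex.log_two_sub_two_cos, Complex.exp_two_pi_mul_I_pow]
  have hre : |W.re| ≤ ‖W‖ := Complex.abs_re_le_norm W
  rw [hlog, abs_mul, abs_two]
  have hA := abs_sub (∑ j ∈ Icc 1 k, Real.log ‖1 - z ^ j‖ + W.re) W.re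
  rw [add_sub_cancel_right] at hA
  have hfinal : 4 * k / c * (1 + Real.log (k / c)) / (M + 1) + (M + 1) / c
      = 2 * (2 * k / c * (1 + Real.log (k / c)) / (M + 1)) + 2 * ((M + 1) / (2 * c)) := by
    field_simp; ring
  linarith

theorem abs_birkhoff_average_le (h : BadlyApproximableWith c α) (hc : 0 < c) {k : ℕ}
    (hk : 0 < k) :
    |(∑ j ∈ Icc 1 k, Real.log (2 - 2 * Real.cos (2 * π * (j * α)))) / k|
      ≤ (6 / c - 4 / c * Real.log c + 4 / c * Real.log k) / √k := by
  have hk' : (1 : ℝ) ≤ k := by exact_mod_cast hk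
  have hc₂ : c ≤ 1 / 2 := by
    simpa using (h 1 one_pos).trans (by simpa using abs_sub_round α)
  have hlog : 0 ≤ 1 + Real.log (k / c) :=
    add_nonneg zero_le_one (Real.log_nonneg (by rw [le_div_iff₀ hc]; linarith))
  set s := √(k : ℝ)
  have hs₁ : 1 ≤ s := Real.one_le_sqrt.2 hk'
  have hsk : s * s = k := Real.mul_self_sqrt (by positivity)
  have hM₁ : s ≤ Nat.sqrt k + 1 := Real.real_sqrt_le_nat_sqrt_succ
  have hM₂ : (Nat.sqrt k : ℝ) ≤ s := Real.nat_sqrt_le_real_sqrt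
  rw [abs_div, abs_of_pos (by positivity : (0 : ℝ) < k), div_le_iff₀ (by positivity)]
  refine (h.abs_sum_log_two_sub_two_cos_le hc hk (Nat.sqrt k)).trans ?_
  have h1 : 4 * k / c * (1 + Real.log (k / c)) / (Nat.sqrt k + 1)
      ≤ 4 / c * (1 + Real.log (k / c)) * s := by
    rw [div_le_iff₀ (by positivity)]
    calc 4 * k / c * (1 + Real.log (k / c)) = 4 / c * (1 + Real.log (k / c)) * (s * s) := by
          rw [hsk]; ring
      _ ≤ 4 / c * (1 + Real.log (k / c)) * (s * (Nat.sqrt k + 1)) := by gcongr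
      _ = _ := by ring
  have h2 : ((Nat.sqrt k : ℝ) + 1) / c ≤ 2 / c * s := by
    rw [div_le_iff₀ hc]; field_simp; linarith
  rw [Real.log_div (by positivity) hc.ne'] at h1 ⊢
  calc _ ≤ 4 / c * (1 + (Real.log k - Real.log c)) * s + 2 / c * s := add_le_add h1 h2
    _ = (6 / c - 4 / c * Real.log c + 4 / c * Real.log k) / s * (s * s) := by field_simp; ring
    _ = _ := by rw [hsk]

theorem tendsto_birkhoff_average (h : BadlyApproximableWith c α) (hc : 0 < c) :
    Tendsto (fun k : ℕ => (∑ j ∈ Icc 1 k, Real.log (2 - 2 * Real.cos (2 * π * (j * α)))) / k)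
      atTop (𝓝 0) := by
  refine squeeze_zero_norm' ?_
    ((tendsto_add_mul_log_div_sqrt_atTop (6 / c - 4 / c * Real.log c) (4 / c)).comp
      tendsto_natCast_atTop_atTop)
  filter_upwards [eventually_gt_atTop 0] with k hk
  exact h.abs_birkhoff_average_le hc hk

end BadlyApproximableWith

/-- For the golden mean `α = (√5 - 1)/2`, `g x = log (2 - 2 cos (2π x))` and Birkhoff sums
`S k = ∑_{j=1}^{k} g (j α)`, the Birkhoff averages satisfy `S k / k → 0`. -/
theorem birkhoff_average_tendsto_zero (α : ℝ) (hα : α = (Real.sqrt 5 - 1) / 2)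
    (g : ℝ → ℝ) (hg : ∀ x, g x = Real.log (2 - 2 * Real.cos (2 * Real.pi * x)))
    (S : ℕ → ℝ) (hS : ∀ k, S k = ∑ j ∈ Finset.Icc 1 k, g (j * α)) :
    Tendsto (fun k : ℕ => S k / k) atTop (nhds 0) := by
  have hφ : α = φ⁻¹ := by rw [hα, inv_goldenRatio, goldenConj]; ring
  simp only [hS, hg]
  subst hφ
  exact badlyApproximableWith_inv_goldenRatio.tendsto_birkhoff_average (by norm_num)
end
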